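/- For a deterministic unary two-way automaton and any fixed pair of states (s, s'), the set Right_{s,s'} = {(N, T) : starting from configuration (s, 0) on tape {0,…,N+1}, the automaton reaches (s', N+1) at time T via a right traversal, i.e., without visiting position N+1 at any earlier time} is Presburger-definable, provided N exceeds the amplitudes of all states. -/

import Mathlib

/-- Tape symbols: left endmarker, the unary letter, right endmarker. -/
inductive TapeSym : Type
  | lmark | a | rmark

/-- A linear subset of ℕᵏ. -/
def IsLinearSet' {k : ℕ} (S : Set (Fin k → ℕ)) : Prop :=
  ∃ (m : ℕ) (a : Fin k → ℕ) (b : Fin m → Fin k → ℕ),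
    S = {v | ∃ c : Fin m → ℕ, v = a + ∑ j, c j • b j}

/-- A semilinear (equivalently, Presburger-definable) subset of ℕᵏ. -/
def IsSemilinearSet' {k : ℕ} (S : Set (Fin k → ℕ)) : Prop :=
  ∃ (m : ℕ) (f : Fin m → Set (Fin k → ℕ)),
    (∀ i, IsLinearSet' (f i)) ∧ S = ⋃ i, f i

/-- Eventually periodic subset of ℕ. -/
def EventuallyPeriodic (L : Set ℕ) : Prop :=
  ∃ n₀ p : ℕ, 1 ≤ p ∧ ∀ n, n₀ ≤ n → (n ∈ L ↔ n + p ∈ L)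

/-- The unary language {aⁿ : n ∈ L} is regular. -/
def UnaryRegular (L : Set ℕ) : Prop :=
  ∃ (σ : Type) (_ : Fintype σ) (dfa : DFA Unit σ),
    ∀ n : ℕ, List.replicate n () ∈ dfa.accepts ↔ n ∈ L

/-- The symbol scanned at position `p` on the tape `{0, …, N+1}`. -/
def symAt (N : ℕ) (p : ℤ) : TapeSym :=
  if p ≤ 0 then TapeSym.lmark else if (N : ℤ) + 1 ≤ p then TapeSym.rmark else TapeSym.a

/-- One step of a deterministic two-way unary automaton on the tape `{0, …, N+1}`. -/
def tstep {Q : Type} (δ : Q → TapeSym → Q × ℤ) (N : ℕ) (c : Q × ℤ) : Q × ℤ :=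
  ((δ c.1 (symAt N c.2)).1, c.2 + (δ c.1 (symAt N c.2)).2)

/-- The run after `t` steps from configuration `(s, p)` on the tape `{0, …, N+1}`. -/
def trun {Q : Type} (δ : Q → TapeSym → Q × ℤ) (N : ℕ) (s : Q) (p : ℤ) (t : ℕ) : Q × ℤ :=
  (tstep δ N)^[t] (s, p)

/-- One step of the free run (two-way infinite unary tape, no endmarkers). -/
def freeStep {Q : Type} (δa : Q → Q × ℤ) (c : Q × ℤ) : Q × ℤ :=
  ((δa c.1).1, c.2 + (δa c.1).2)

/-- The free run from state `s` (displacement measured from the start). -/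
def freeRun {Q : Type} (δa : Q → Q × ℤ) (s : Q) (t : ℕ) : Q × ℤ :=
  (freeStep δa)^[t] (s, 0)

/-- The amplitude of a state `s`: the width of the range of displacements along
the first loop of its free run (which is contained in the first `|Q| + 1` steps). -/
noncomputable def amplitude {Q : Type} [Fintype Q] (δa : Q → Q × ℤ) (s : Q) : ℤ :=
  ((Finset.range (Fintype.card Q + 1)).image fun i => (freeRun δa s i).2).max'
      (by simp [Finset.nonempty_range_iff]) -
  ((Finset.range (Fintype.card Q + 1)).image fun i => (freeRun δa s i).2).min'
      (by simp [Finset.nonempty_range_iff])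

/-!
Remove the right endmarker. Since the head moves by at most one cell, a right traversal of
`{0, …, N+1}` ending at time `T` is exactly a first visit of `N + 1` at time `T` by the single run
on the half-infinite tape. That run is eventually periodic up to a translation: either it comes back
to the left endmarker in the same state twice, or from some time on it stays on one side of it and
runs freely, and then a repeated state repeats the configuration up to a displacement `d`. If
`d ≤ 0` the run is bounded and no large `N` occurs; if `d > 0`, for large `N` the first visit of
`N + 1 + d` comes exactly one period after the first visit of `N + 1`. So the pairs `(N, T)` form a
finite set plus finitely many lines of direction `(d, period)`, and the amplitude condition only
removes finitely many columns `N`.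
-/

open Set Pointwise

theorem IsLinearSet.isLinearSet' {k : ℕ} {S : Set (Fin k → ℕ)} (h : IsLinearSet S) :
    IsLinearSet' S := by
  obtain ⟨a, t, ht, rfl⟩ := h
  obtain ⟨m, b, rfl⟩ := ht.fin_embedding
  refine ⟨m, a, b, ?_⟩
  ext v
  simp only [mem_vadd_set, SetLike.mem_coe, AddSubmonoid.mem_closure_range_iff_of_fintype,
    vadd_eq_add, mem_ofPred_eq]
  constructor
  · rintro ⟨_, ⟨c, rfl⟩, rfl⟩
    exact ⟨c, rfl⟩
  · rintro ⟨c, rfl⟩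
    exact ⟨_, ⟨c, rfl⟩, rfl⟩

theorem IsSemilinearSet.isSemilinearSet' {k : ℕ} {S : Set (Fin k → ℕ)} (h : IsSemilinearSet S) :
    IsSemilinearSet' S := by
  obtain ⟨L, hL, hlin, rfl⟩ := h
  obtain ⟨m, f, rfl⟩ := hL.fin_embedding
  exact ⟨m, f, fun i => (hlin _ (mem_range_self i)).isLinearSet', sUnion_range f⟩

theorem finite_setOf_fst_lt {R : ℕ → ℕ → Prop} (hcol : ∀ N, {T | R N T}.Finite) (n : ℕ) :
    {v : Fin 2 → ℕ | R (v 0) (v 1) ∧ v 0 < n}.Finite := by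
  refine ((finite_Iio n).biUnion fun N _ => (hcol N).image fun T => ![N, T]).subset ?_
  rintro v ⟨hv, hn⟩
  simp only [mem_iUnion, mem_image, mem_ofPred_eq, mem_Iio]
  exact ⟨v 0, hn, v 1, hv, by ext i; fin_cases i <;> rfl⟩

theorem mem_vadd_closure_singleton {M : Type*} [AddCommMonoid M] (b d v : M) :
    v ∈ b +ᵥ (AddSubmonoid.closure {d} : Set M) ↔ ∃ k : ℕ, v = b + k • d := by
  simp only [mem_vadd_set, SetLike.mem_coe, AddSubmonoid.mem_closure_singleton, vadd_eq_add]
  exact ⟨fun ⟨_, ⟨k, hk⟩, hv⟩ => ⟨k, by rw [← hv, ← hk]⟩, fun ⟨k, hv⟩ => ⟨_, ⟨k, rfl⟩, hv.symm⟩⟩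

section ColumnShift

variable {R : ℕ → ℕ → Prop} {B D P : ℕ}

theorem rel_add_nsmul_of_column_shift
    (hshift : ∀ N ≥ B, ∀ T, R (N + D) T ↔ P ≤ T ∧ R N (T - P))
    {b : Fin 2 → ℕ} (hb : R (b 0) (b 1)) (hB : B ≤ b 0) (k : ℕ) :
    R ((b + k • ![D, P]) 0) ((b + k • ![D, P]) 1) := by
  induction k with
  | zero => simpa using hb
  | succ k ih =>
    rw [succ_nsmul, ← add_assoc]
    refine (hshift _ (le_add_right hB) _).2 ⟨le_add_self, ?_⟩
    show R _ ((b + k • ![D, P]) 1 + P - P)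
    rwa [Nat.add_sub_cancel]

theorem exists_eq_add_nsmul_of_column_shift
    (hshift : ∀ N ≥ B, ∀ T, R (N + D) T ↔ P ≤ T ∧ R N (T - P)) (hD : 0 < D)
    {v : Fin 2 → ℕ} (hv : R (v 0) (v 1)) (hB : B ≤ v 0) :
    ∃ b, R (b 0) (b 1) ∧ b 0 < B + D ∧ B ≤ b 0 ∧ ∃ k : ℕ, v = b + k • ![D, P] := by
  induction hn : v 0 using Nat.strong_induction_on generalizing v with
  | _ n ih =>
    by_cases hsmall : v 0 < B + D
    · exact ⟨v, hv, hsmall, hB, 0, by simp⟩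
    have hv' := (hshift (v 0 - D) (by omega) (v 1)).1 (by rwa [Nat.sub_add_cancel (by omega)])
    have hw0 : (v - ![D, P]) 0 = v 0 - D := rfl
    have hw1 : (v - ![D, P]) 1 = v 1 - P := rfl
    obtain ⟨b, hbR, hbB, hBb, k, hk⟩ :=
      ih (v 0 - D) (by omega) (by rw [hw0, hw1]; exact hv'.2) (by omega) hw0
    refine ⟨b, hbR, hbB, hBb, k + 1, ?_⟩
    rw [succ_nsmul, ← add_assoc, ← hk]
    ext i
    fin_cases i
    · exact (Nat.sub_add_cancel (by omega : D ≤ v 0)).symm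
    · exact (Nat.sub_add_cancel hv'.1).symm

/-- The relation is a finite set plus finitely many lines of direction `(D, P)`. -/
theorem isSemilinearSet_of_column_shift
    (hshift : ∀ N ≥ B, ∀ T, R (N + D) T ↔ P ≤ T ∧ R N (T - P)) (hD : 0 < D)
    (hcol : ∀ N, {T | R N T}.Finite) :
    IsSemilinearSet {v : Fin 2 → ℕ | R (v 0) (v 1)} := by
  have hS : {v : Fin 2 → ℕ | R (v 0) (v 1)} = {v | R (v 0) (v 1) ∧ v 0 < B} ∪
      ⋃ b ∈ {v : Fin 2 → ℕ | R (v 0) (v 1) ∧ v 0 < B + D} ∩ {v | B ≤ v 0},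
        b +ᵥ (AddSubmonoid.closure {![D, P]} : Set (Fin 2 → ℕ)) := by
    ext v
    simp only [mem_union, mem_iUnion, mem_vadd_closure_singleton, exists_prop, mem_ofPred_eq,
      mem_inter_iff, and_assoc]
    constructor
    · intro hv
      by_cases hB : v 0 < B
      · exact Or.inl ⟨hv, hB⟩
      · exact Or.inr (exists_eq_add_nsmul_of_column_shift hshift hD hv (by omega))
    · rintro (⟨hv, -⟩ | ⟨b, hb, -, hB, k, rfl⟩)
      · exact hv
      · exact rel_add_nsmul_of_column_shift hshift hb hB k
  rw [hS]
  exact (IsSemilinearSet.of_finite (finite_setOf_fst_lt hcol B)).union <|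
    IsSemilinearSet.biUnion ((finite_setOf_fst_lt hcol (B + D)).inter_of_left _) fun b _ =>
      IsLinearSet.isSemilinearSet ⟨b, {![D, P]}, finite_singleton _, rfl⟩

end ColumnShift

theorem le_of_forall_lt_ne_add_one {f : ℕ → ℤ} {z : ℤ} (h0 : f 0 ≤ z)
    (hstep : ∀ t, f (t + 1) ≤ f t + 1) {T : ℕ} (hT : ∀ t < T, f t ≠ z + 1) :
    ∀ t < T, f t ≤ z := by
  intro t ht
  induction t with
  | zero => exact h0
  | succ t ih =>
    have := hstep t
    have := ih (by omega)
    have := hT (t + 1) ht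
    omega

theorem nonpos_iff_of_forall_ne_zero {f : ℕ → ℤ} (hstep : ∀ t, |f (t + 1) - f t| ≤ 1) {t₀ : ℕ}
    (hne : ∀ t ≥ t₀, f t ≠ 0) : ∀ t ≥ t₀, (f t ≤ 0 ↔ f t₀ ≤ 0) := by
  intro t ht
  induction t, ht using Nat.le_induction with
  | base => rfl
  | succ t ht ih =>
    have := abs_le.1 (hstep t)
    have := hne t ht
    have := hne (t + 1) (by omega)
    rw [← ih]
    omega

section FirstHit

variable {Q : Type}

def FirstHit (c : ℕ → Q × ℤ) (q : Q) (z : ℤ) (T : ℕ) : Prop :=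
  c T = (q, z) ∧ ∀ t < T, (c t).2 ≠ z

theorem FirstHit.unique {c : ℕ → Q × ℤ} {q q' : Q} {z : ℤ} {T T' : ℕ} (h : FirstHit c q z T)
    (h' : FirstHit c q' z T') : T = T' := by
  by_contra hne
  rcases Nat.lt_or_gt_of_ne hne with hlt | hlt
  · exact h'.2 T hlt (by rw [h.1])
  · exact h.2 T' hlt (by rw [h'.1])

theorem firstHit_congr {c c' : ℕ → Q × ℤ} {q : Q} {z : ℤ} {T : ℕ} (h : ∀ t ≤ T, c t = c' t) :
    FirstHit c q z T ↔ FirstHit c' q z T := by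
  unfold FirstHit
  rw [h T le_rfl]
  exact and_congr_right' (forall₂_congr fun t ht => by rw [h t ht.le])

def EventuallyDriftPeriodic (c : ℕ → Q × ℤ) : Prop :=
  ∃ (t₁ per : ℕ) (d : ℤ), 0 < per ∧ ∀ t ≥ t₁, c (t + per) = ((c t).1, (c t).2 + d)

theorem EventuallyDriftPeriodic.of_comp_add {c : ℕ → Q × ℤ} {t₀ : ℕ}
    (h : EventuallyDriftPeriodic fun n => c (t₀ + n)) : EventuallyDriftPeriodic c := by
  obtain ⟨t₁, per, d, hper, h⟩ := h
  refine ⟨t₀ + t₁, per, d, hper, fun t ht => ?_⟩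
  have := h (t - t₀) (by omega)
  simp only at this
  rwa [← add_assoc, Nat.add_sub_cancel' (by omega)] at this

theorem forall_snd_le_of_drift_nonpos {c : ℕ → Q × ℤ} {t₁ per : ℕ} {d : ℤ} (hper : 0 < per)
    (hc : ∀ t ≥ t₁, c (t + per) = ((c t).1, (c t).2 + d)) (hd : d ≤ 0) {B : ℤ}
    (hB : ∀ t < t₁ + per, (c t).2 ≤ B) (t : ℕ) : (c t).2 ≤ B := by
  induction t using Nat.strong_induction_on with
  | _ t ih =>
    by_cases ht : t < t₁ + per
    · exact hB t ht
    · have h := congrArg Prod.snd (hc (t - per) (by omega))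
      rw [Nat.sub_add_cancel (by omega)] at h
      have := ih (t - per) (by omega)
      omega

theorem firstHit_add_iff {c : ℕ → Q × ℤ} {t₁ per : ℕ} {d : ℤ}
    (hc : ∀ t ≥ t₁, c (t + per) = ((c t).1, (c t).2 + d)) (hd : 0 ≤ d) {z : ℤ}
    (hlate : ∀ t, z ≤ (c t).2 → t₁ + per ≤ t) (q : Q) (T : ℕ) :
    FirstHit c q (z + d) T ↔ per ≤ T ∧ FirstHit c q z (T - per) := by
  constructor
  · rintro ⟨hT, hbefore⟩
    have hTlate := hlate T (by rw [hT]; omega)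
    have hshift := hc (T - per) (by omega)
    rw [Nat.sub_add_cancel (by omega), hT, Prod.ext_iff] at hshift
    refine ⟨by omega, Prod.ext hshift.1.symm (by simp only at hshift; omega), fun u hu hz => ?_⟩
    have hu₁ := hlate u hz.ge
    exact hbefore (u + per) (by omega) (by rw [hc u (by omega), hz])
  · rintro ⟨hper, hT, hbefore⟩
    have hTlate := hlate (T - per) (by rw [hT])
    refine ⟨?_, fun u hu hz => ?_⟩
    · rw [← Nat.sub_add_cancel hper, hc _ (by omega), hT]
    · have hu₁ := hlate u (by rw [hz]; omega)
      have hshift := hc (u - per) (by omega)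
      rw [Nat.sub_add_cancel (by omega), Prod.ext_iff] at hshift
      exact hbefore (u - per) (by omega) (by omega)

theorem EventuallyDriftPeriodic.exists_firstHit_shift {c : ℕ → Q × ℤ}
    (hc : EventuallyDriftPeriodic c) (q : Q) :
    ∃ B D P : ℕ, 0 < D ∧ ∀ N ≥ B, ∀ T,
      FirstHit c q ((N + D : ℕ) + 1) T ↔ P ≤ T ∧ FirstHit c q (N + 1) (T - P) := by
  obtain ⟨t₁, per, d, hper, hc⟩ := hc
  obtain ⟨B', hB'⟩ := ((finite_Iio (t₁ + per)).image fun t => (c t).2).bddAbove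
  set B := B'.toNat
  have hB (t : ℕ) (ht : t < t₁ + per) : (c t).2 ≤ B :=
    (hB' ⟨t, ht, rfl⟩).trans (Int.self_le_toNat B')
  rcases le_or_gt d 0 with hd | hd
  · have hbdd := forall_snd_le_of_drift_nonpos hper hc hd hB
    refine ⟨B, 1, 0, one_pos, fun N hN T => ?_⟩
    have hhit (z : ℤ) (hz : B < z) (T : ℕ) : ¬FirstHit c q z T := fun h => by
      have := hbdd T
      rw [h.1] at this
      omega
    exact iff_of_false (hhit _ (by omega) T) fun h => hhit _ (by omega) _ h.2
  · refine ⟨B, d.toNat, per, by omega, fun N hN T => ?_⟩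
    have hz : (((N + d.toNat : ℕ) : ℤ) + 1) = (N + 1) + d := by push_cast; omega
    rw [hz]
    refine firstHit_add_iff hc hd.le (fun t ht => ?_) q T
    by_contra hlt
    have := hB t (by omega)
    omega

end FirstHit

section FreeRun

variable {Q : Type} (δa : Q → Q × ℤ)

theorem freeStep_iterate_translate (n : ℕ) (c : Q × ℤ) (d : ℤ) :
    (freeStep δa)^[n] (c.1, c.2 + d) =
      (((freeStep δa)^[n] c).1, ((freeStep δa)^[n] c).2 + d) := by
  induction n with
  | zero => rfl
  | succ n ih =>
    simp only [Function.iterate_succ_apply', ih, freeStep]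
    exact Prod.ext rfl (add_right_comm _ _ _)

/-- Pigeonhole on the states: once a state repeats, the translation invariance of the free
dynamics repeats the whole configuration up to the displacement accumulated in between. -/
theorem eventuallyDriftPeriodic_freeStep_iterate [Finite Q] (c : Q × ℤ) :
    EventuallyDriftPeriodic fun n => (freeStep δa)^[n] c := by
  obtain ⟨x, y, hne, hxy⟩ := Finite.exists_ne_map_eq_of_infinite fun n => ((freeStep δa)^[n] c).1
  wlog hlt : x < y generalizing x y
  · exact this y x hne.symm hxy.symm (by omega)
  set d := ((freeStep δa)^[y] c).2 - ((freeStep δa)^[x] c).2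
  have hy : (freeStep δa)^[y] c = (((freeStep δa)^[x] c).1, ((freeStep δa)^[x] c).2 + d) :=
    Prod.ext hxy.symm (by simp only [d]; ring)
  refine ⟨x, y - x, d, by omega, fun t ht => ?_⟩
  simp only
  rw [show t + (y - x) = (t - x) + y by omega, Function.iterate_add_apply, hy,
    freeStep_iterate_translate, ← Function.iterate_add_apply, Nat.sub_add_cancel ht]

end FreeRun

section HalfRun

variable {Q : Type} (δ : Q → TapeSym → Q × ℤ)

def halfSym (p : ℤ) : TapeSym :=
  if p ≤ 0 then TapeSym.lmark else TapeSym.a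

/-- The automaton on the tape `{0, 1, 2, …}`, i.e. with the right endmarker removed; at
nonpositive positions it reads the left endmarker. -/
def halfStep (c : Q × ℤ) : Q × ℤ :=
  freeStep (fun q => δ q (halfSym c.2)) c

def halfRun (s : Q) (t : ℕ) : Q × ℤ :=
  (halfStep δ)^[t] (s, 0)

variable {δ}

theorem halfRun_succ (s : Q) (t : ℕ) : halfRun δ s (t + 1) = halfStep δ (halfRun δ s t) :=
  Function.iterate_succ_apply' _ _ _

theorem halfRun_add (s : Q) (m n : ℕ) :
    halfRun δ s (m + n) = (halfStep δ)^[m] (halfRun δ s n) :=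
  Function.iterate_add_apply _ _ _ _

theorem abs_halfRun_succ_sub_le (hδ : ∀ q x, |(δ q x).2| ≤ 1) (s : Q) (t : ℕ) :
    |(halfRun δ s (t + 1)).2 - (halfRun δ s t).2| ≤ 1 := by
  rw [halfRun_succ]
  simpa [halfStep, freeStep] using hδ _ _

theorem halfRun_add_eq_freeStep_iterate {s : Q} {t₀ : ℕ} {σ : TapeSym}
    (hσ : ∀ t ≥ t₀, halfSym (halfRun δ s t).2 = σ) (n : ℕ) :
    halfRun δ s (t₀ + n) = (freeStep fun q => δ q σ)^[n] (halfRun δ s t₀) := by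
  induction n with
  | zero => rfl
  | succ n ih =>
    rw [← add_assoc, halfRun_succ, Function.iterate_succ_apply', ← ih, halfStep,
      hσ _ (by omega)]

/-- Either the head returns to the left endmarker with the same state twice, and the run is
periodic, or it eventually stays on one side of it, where it runs freely. -/
theorem eventuallyDriftPeriodic_halfRun [Finite Q] (hδ : ∀ q x, |(δ q x).2| ≤ 1) (s : Q) :
    EventuallyDriftPeriodic (halfRun δ s) := by
  by_cases hzero : {t | (halfRun δ s t).2 = 0}.Infinite
  · obtain ⟨a, ha, b, hb, hne, hab⟩ := hzero.exists_ne_map_eq_of_mapsTo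
      (f := fun t => (halfRun δ s t).1) (mapsTo_univ _ _) finite_univ
    wlog hlt : a < b generalizing a b
    · exact this b hb a ha hne.symm hab.symm (by omega)
    have hrep : halfRun δ s b = halfRun δ s a := Prod.ext hab.symm (by rw [hb, ha])
    refine ⟨a, b - a, 0, by omega, fun t ht => ?_⟩
    rw [add_zero, show t + (b - a) = (t - a) + b by omega, halfRun_add, hrep, ← halfRun_add,
      Nat.sub_add_cancel ht]
  · obtain ⟨t₀, ht₀⟩ := (not_infinite.1 hzero).bddAbove
    have hne : ∀ t ≥ t₀ + 1, (halfRun δ s t).2 ≠ 0 := fun t ht h0 => absurd (ht₀ h0) (by omega)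
    have hσ (t : ℕ) (ht : t ≥ t₀ + 1) :
        halfSym (halfRun δ s t).2 = halfSym (halfRun δ s (t₀ + 1)).2 := by
      simp only [halfSym, nonpos_iff_of_forall_ne_zero (abs_halfRun_succ_sub_le hδ s) hne t ht]
    refine EventuallyDriftPeriodic.of_comp_add (t₀ := t₀ + 1) ?_
    simp only [halfRun_add_eq_freeStep_iterate hσ]
    exact eventuallyDriftPeriodic_freeStep_iterate _ _

end HalfRun

section Traversal

variable {Q : Type} {δ : Q → TapeSym → Q × ℤ}

theorem tstep_eq_halfStep {N : ℕ} {c : Q × ℤ} (hc : c.2 ≤ N) : tstep δ N c = halfStep δ c := by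
  have hsym : symAt N c.2 = halfSym c.2 := by
    unfold symAt halfSym
    split_ifs <;> first | rfl | omega
  simp only [tstep, halfStep, freeStep, hsym]

/-- The hypothesis only asks for the bound where the runs already agree, so that it can come
from either run. -/
theorem trun_eq_halfRun {N : ℕ} {s : Q} {T : ℕ}
    (hle : ∀ t < T, trun δ N s 0 t = halfRun δ s t → (halfRun δ s t).2 ≤ N) :
    ∀ t ≤ T, trun δ N s 0 t = halfRun δ s t := by
  intro t ht
  induction t with
  | zero => rfl
  | succ t ih =>
    have heq := ih (by omega)
    rw [trun, Function.iterate_succ_apply', ← trun, heq, halfRun_succ,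
      tstep_eq_halfStep (hle t (by omega) heq)]

/-- Moves have length at most one, so before its first visit of `N + 1` the head stays on
`{…, N}` and never reads the right endmarker. -/
theorem firstHit_trun_iff_halfRun (hδ : ∀ q x, |(δ q x).2| ≤ 1) (s s' : Q) (N T : ℕ) :
    FirstHit (trun δ N s 0) s' (N + 1) T ↔ FirstHit (halfRun δ s) s' (N + 1) T := by
  have htrun_step (t : ℕ) : (trun δ N s 0 (t + 1)).2 ≤ (trun δ N s 0 t).2 + 1 := by
    rw [trun, Function.iterate_succ_apply', ← trun]
    have := abs_le.1 (hδ (trun δ N s 0 t).1 (symAt N (trun δ N s 0 t).2))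
    simp only [tstep]
    omega
  have hhalf_step (t : ℕ) : (halfRun δ s (t + 1)).2 ≤ (halfRun δ s t).2 + 1 := by
    have := abs_le.1 (abs_halfRun_succ_sub_le hδ s t)
    omega
  constructor
  · intro h
    refine (firstHit_congr (trun_eq_halfRun fun t ht heq => heq ▸ ?_)).1 h
    exact le_of_forall_lt_ne_add_one (f := fun t => (trun δ N s 0 t).2)
      (Int.natCast_nonneg N) htrun_step h.2 t ht
  · intro h
    refine (firstHit_congr (trun_eq_halfRun fun t ht _ => ?_)).2 h
    exact le_of_forall_lt_ne_add_one (f := fun t => (halfRun δ s t).2)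
      (Int.natCast_nonneg N) hhalf_step h.2 t ht

end Traversal

theorem exists_forall_lt_iff_le {ι : Type} [Finite ι] (a : ι → ℤ) :
    ∃ N₀ : ℕ, ∀ N : ℕ, (∀ i, a i < N) ↔ N₀ ≤ N := by
  cases nonempty_fintype ι
  refine ⟨Finset.univ.sup fun i => (a i + 1).toNat, fun N => ?_⟩
  simp only [Finset.sup_le_iff, Finset.mem_univ, true_implies, Int.toNat_le]
  exact forall_congr' fun i => Int.add_one_le_iff.symm

/-- for fixed states `s, s'`, the set of pairs `(N, T)` such that the
automaton performs a right traversal from `(s, 0)` to `(s', N+1)` in time `T`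
(never visiting the right end earlier), with `N` exceeding all amplitudes, is
Presburger-definable (semilinear). -/
theorem stmt8 {Q : Type} [Fintype Q] (δ : Q → TapeSym → Q × ℤ)
    (hδ : ∀ q x, (δ q x).2 = -1 ∨ (δ q x).2 = 0 ∨ (δ q x).2 = 1)
    (s s' : Q) :
    IsSemilinearSet' {v : Fin 2 → ℕ |
      (∀ q : Q, amplitude (fun q => δ q TapeSym.a) q < (v 0 : ℤ)) ∧
      trun δ (v 0) s 0 (v 1) = (s', (v 0 : ℤ) + 1) ∧
      ∀ t, t < v 1 → (trun δ (v 0) s 0 t).2 ≠ (v 0 : ℤ) + 1} := by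
  have hδ' : ∀ q x, |(δ q x).2| ≤ 1 := fun q x => by
    rcases hδ q x with h | h | h <;> simp [h]
  obtain ⟨N₀, hN₀⟩ := exists_forall_lt_iff_le fun q => amplitude (fun q => δ q TapeSym.a) q
  obtain ⟨B, D, P, hD, hshift⟩ :=
    (eventuallyDriftPeriodic_halfRun hδ' s).exists_firstHit_shift s'
  have hset : {v : Fin 2 → ℕ |
      (∀ q : Q, amplitude (fun q => δ q TapeSym.a) q < (v 0 : ℤ)) ∧
      trun δ (v 0) s 0 (v 1) = (s', (v 0 : ℤ) + 1) ∧
      ∀ t, t < v 1 → (trun δ (v 0) s 0 t).2 ≠ (v 0 : ℤ) + 1} =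
      {v | N₀ ≤ v 0 ∧ FirstHit (halfRun δ s) s' (v 0 + 1) (v 1)} := by
    ext v
    exact and_congr (hN₀ (v 0)) (firstHit_trun_iff_halfRun hδ' s s' (v 0) (v 1))
  have hshift' : ∀ N ≥ max B N₀, ∀ T,
      (N₀ ≤ N + D ∧ FirstHit (halfRun δ s) s' ((N + D : ℕ) + 1) T) ↔
        P ≤ T ∧ N₀ ≤ N ∧ FirstHit (halfRun δ s) s' (N + 1) (T - P) := fun N hN T => by
    simp only [hshift N (le_of_max_le_left hN), le_of_max_le_right hN,
      (le_of_max_le_right hN).trans (Nat.le_add_right N D), true_and]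
  rw [hset]
  exact (isSemilinearSet_of_column_shift
    (R := fun N T => N₀ ≤ N ∧ FirstHit (halfRun δ s) s' (N + 1) T) hshift' hD fun N =>
    Set.Subsingleton.finite fun T hT T' hT' => hT.2.unique hT'.2).isSemilinearSet'
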